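/- arXiv:2404.13727 — 2 statements merged into one kernel-verified Lean document; each statement's English description precedes it below -/
import Mathlib

section
/- Let Z be a proper geodesic δ-hyperbolic space and σ, σ': [0,∞) → Z geodesic rays with the same endpoint at infinity (i.e. the images of σ and σ' are at finite Hausdorff distance). Then for all y, z ∈ Z, |β_σ(y,z) − β_{σ'}(y,z)| ≤ 40δ. -/
open Filter Metric Set

noncomputable def gromovProd {Z : Type*} [MetricSpace Z] (x y z : Z) : ℝ :=
  (dist x y + dist x z - dist y z) / 2

/-- `Z` is δ-hyperbolic in the Gromov product sense. -/
def IsDeltaHyperbolic (Z : Type*) [MetricSpace Z] (δ : ℝ) : Prop :=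
  ∀ w x y z : Z, min (gromovProd x w y) (gromovProd x y z) - δ ≤ gromovProd x w z

/-- `f` parametrizes a geodesic segment from `x` to `y` by arclength on `[0, dist x y]`. -/
def IsGeodesicSegment {Z : Type*} [MetricSpace Z] (f : ℝ → Z) (x y : Z) : Prop :=
  f 0 = x ∧ f (dist x y) = y ∧
    ∀ s ∈ Set.Icc (0:ℝ) (dist x y), ∀ t ∈ Set.Icc (0:ℝ) (dist x y),
      dist (f s) (f t) = |s - t|

/-- `Z` is a geodesic metric space. -/
def IsGeodesicSpace (Z : Type*) [MetricSpace Z] : Prop :=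
  ∀ x y : Z, ∃ f : ℝ → Z, IsGeodesicSegment f x y

/-- The image of the geodesic segment `[x,y]` parametrized by `f`. -/
def segImage {Z : Type*} [MetricSpace Z] (f : ℝ → Z) (x y : Z) : Set Z :=
  f '' Set.Icc 0 (dist x y)

/-- A geodesic ray: an isometric embedding of `[0,∞)`. -/
def IsGeodesicRay {Z : Type*} [MetricSpace Z] (σ : ℝ → Z) : Prop :=
  ∀ s t : ℝ, 0 ≤ s → 0 ≤ t → dist (σ s) (σ t) = |s - t|

/-- A bi-infinite geodesic: an isometric embedding of `ℝ`. -/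
def IsBiInfGeodesic {Z : Type*} [MetricSpace Z] (γ : ℝ → Z) : Prop :=
  ∀ s t : ℝ, dist (γ s) (γ t) = |s - t|

/-- Two geodesic rays are asymptotic (same endpoint at infinity):
their images are at finite Hausdorff distance. -/
def AsymptoticRays {Z : Type*} [MetricSpace Z] (σ σ' : ℝ → Z) : Prop :=
  EMetric.hausdorffEdist (σ '' Set.Ici 0) (σ' '' Set.Ici 0) ≠ ⊤

/-- Extended Gromov product (with respect to `x`) of the two boundary points
represented by the geodesic rays `σ`, `σ'`. -/
noncomputable def extGP {Z : Type*} [MetricSpace Z] (x : Z) (σ σ' : ℝ → Z) : EReal :=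
  Filter.liminf (fun p : ℝ × ℝ => ((gromovProd x (σ p.1) (σ' p.2) : ℝ) : EReal))
    (Filter.atTop ×ˢ Filter.atTop)

/-- Extended Gromov product (with respect to `x`) of a point `y ∈ Z` and the boundary
point represented by the geodesic ray `σ`. -/
noncomputable def ptRayGP {Z : Type*} [MetricSpace Z] (x y : Z) (σ : ℝ → Z) : EReal :=
  Filter.liminf (fun t : ℝ => ((gromovProd x y (σ t) : ℝ) : EReal)) Filter.atTop

/-- The visual quasi-metric `d_x(ξ,η) = exp(-2⟨ξ,η⟩_x)` on the Gromov boundary,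
for boundary points represented by geodesic rays. -/
noncomputable def visDist {Z : Type*} [MetricSpace Z] (x : Z) (σ σ' : ℝ → Z) : ℝ :=
  if extGP x σ σ' = ⊤ then 0 else Real.exp (-2 * (extGP x σ σ').toReal)

/-!
Far out along the rays, `σ t` and a point `σ' (s t)` chosen within the Hausdorff distance `C`
of it have Gromov product at `z` larger than `d(z, y)`. The four-point condition for `y, z`
and these two points then says that the differences `d(y, ·) - d(z, ·)` at them agree up to
`2δ`, and this survives the limit `t → ∞`; so the Busemann functions differ by at most `2δ`.
-/

open Topology

section

variable {Z : Type*} [MetricSpace Z]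

lemma gromovProd_comm (x y z : Z) : gromovProd x y z = gromovProd x z y := by
  simp only [gromovProd, dist_comm y z, add_comm (dist x y)]

lemma gromovProd_le_dist_left (x y z : Z) : gromovProd x y z ≤ dist x y := by
  have := dist_triangle x y z
  simp only [gromovProd]
  linarith

lemma gromovProd_ge_of_dist_le {x p q : Z} {C : ℝ} (hpq : dist p q ≤ C) :
    dist x p - C ≤ gromovProd x p q := by
  have := dist_triangle x q p
  have := dist_comm p q
  simp only [gromovProd]
  linarith

namespace IsDeltaHyperbolic

variable {δ : ℝ}

lemma nonneg (hhyp : IsDeltaHyperbolic Z δ) (x : Z) : 0 ≤ δ := by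
  have h := hhyp x x x x
  simp only [gromovProd, dist_self, add_zero, sub_zero, zero_div, min_self] at h
  linarith

lemma sub_dist_sub_le_of_dist_le_gromovProd (hhyp : IsDeltaHyperbolic Z δ) {y z p q : Z}
    (hpq : dist z y ≤ gromovProd z p q) :
    (dist y q - dist z q) - (dist y p - dist z p) ≤ 2 * δ := by
  have h := hhyp y z p q
  rw [min_eq_left ((gromovProd_le_dist_left z y p).trans hpq)] at h
  simp only [gromovProd] at h
  linarith

lemma abs_sub_dist_sub_le_of_dist_le_gromovProd (hhyp : IsDeltaHyperbolic Z δ) {y z p q : Z}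
    (hpq : dist z y ≤ gromovProd z p q) :
    |(dist y p - dist z p) - (dist y q - dist z q)| ≤ 2 * δ := by
  rw [abs_le]
  constructor
  · linarith [hhyp.sub_dist_sub_le_of_dist_le_gromovProd hpq]
  · linarith [hhyp.sub_dist_sub_le_of_dist_le_gromovProd (gromovProd_comm z p q ▸ hpq)]

lemma abs_sub_le_of_tendsto {ι : Type*} {l : Filter ι} [l.NeBot] (hhyp : IsDeltaHyperbolic Z δ)
    {y z : Z} {p q : ι → Z} {C b b' : ℝ} (hpq : ∀ᶠ i in l, dist (p i) (q i) ≤ C)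
    (hp : Tendsto (fun i => dist z (p i)) l atTop)
    (hb : Tendsto (fun i => dist y (p i) - dist z (p i)) l (𝓝 b))
    (hb' : Tendsto (fun i => dist y (q i) - dist z (q i)) l (𝓝 b')) :
    |b - b'| ≤ 2 * δ := by
  refine le_of_tendsto (hb.sub hb').abs ?_
  filter_upwards [hpq, hp.eventually_ge_atTop (dist z y + C)] with i hpqi hfar
  exact hhyp.abs_sub_dist_sub_le_of_dist_le_gromovProd
    (by linarith [gromovProd_ge_of_dist_le (x := z) hpqi])

end IsDeltaHyperbolic

namespace IsGeodesicRay

variable {σ : ℝ → Z}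

lemma dist_zero (hσ : IsGeodesicRay σ) {t : ℝ} (ht : 0 ≤ t) : dist (σ 0) (σ t) = t := by
  rw [hσ 0 t le_rfl ht, zero_sub, abs_neg, abs_of_nonneg ht]

lemma tendsto_dist_atTop (hσ : IsGeodesicRay σ) (z : Z) :
    Tendsto (fun t => dist z (σ t)) atTop atTop := by
  refine tendsto_atTop_mono' _ ?_ (tendsto_atTop_add_const_right _ (-dist z (σ 0)) tendsto_id)
  filter_upwards [eventually_ge_atTop 0] with t ht
  have := dist_triangle (σ 0) z (σ t)
  have := dist_comm z (σ 0)
  simp only [id]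
  linarith [hσ.dist_zero ht]

end IsGeodesicRay

lemma AsymptoticRays.exists_dist_le {σ σ' : ℝ → Z} (hasym : AsymptoticRays σ σ') :
    ∃ C : ℝ, ∀ t, 0 ≤ t → ∃ s, 0 ≤ s ∧ dist (σ t) (σ' s) ≤ C := by
  have hH : Metric.hausdorffEDist (σ '' Ici 0) (σ' '' Ici 0) ≠ ⊤ := hasym
  refine ⟨(Metric.hausdorffEDist (σ '' Ici 0) (σ' '' Ici 0) + 1).toReal, fun t ht => ?_⟩
  obtain ⟨_, ⟨s, hs, rfl⟩, hlt⟩ := Metric.exists_edist_lt_of_hausdorffEDist_lt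
    (mem_image_of_mem σ (mem_Ici.2 ht)) (ENNReal.lt_add_right hH one_ne_zero)
  refine ⟨s, hs, ?_⟩
  rw [dist_edist]
  exact ENNReal.toReal_mono (ENNReal.add_ne_top.2 ⟨hH, ENNReal.one_ne_top⟩) hlt.le

lemma AsymptoticRays.exists_tendsto_dist_le {σ σ' : ℝ → Z} (hσ : IsGeodesicRay σ)
    (hσ' : IsGeodesicRay σ') (hasym : AsymptoticRays σ σ') :
    ∃ (C : ℝ) (s : ℝ → ℝ), Tendsto s atTop atTop ∧
      ∀ᶠ t in atTop, dist (σ t) (σ' (s t)) ≤ C := by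
  obtain ⟨C, hC⟩ := hasym.exists_dist_le
  choose! s hs0 hs using hC
  refine ⟨C, s, ?_, eventually_atTop.2 ⟨0, hs⟩⟩
  refine tendsto_atTop_mono' _ ?_
    (tendsto_atTop_add_const_right _ (-C) (hσ.tendsto_dist_atTop (σ' 0)))
  filter_upwards [eventually_ge_atTop 0] with t ht
  have := dist_triangle (σ' 0) (σ' (s t)) (σ t)
  have := dist_comm (σ t) (σ' (s t))
  linarith [hσ'.dist_zero (hs0 t ht), hs t ht]

end

theorem stmt7_general {Z : Type*} [MetricSpace Z] {δ : ℝ}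
    (hhyp : IsDeltaHyperbolic Z δ)
    (σ σ' : ℝ → Z) (hσ : IsGeodesicRay σ) (hσ' : IsGeodesicRay σ')
    (hasym : AsymptoticRays σ σ')
    (y z : Z) (b b' : ℝ)
    (hb : Filter.Tendsto (fun t => dist y (σ t) - dist z (σ t)) Filter.atTop (nhds b))
    (hb' : Filter.Tendsto (fun t => dist y (σ' t) - dist z (σ' t)) Filter.atTop (nhds b')) :
    |b - b'| ≤ 40 * δ := by
  obtain ⟨C, s, hs, hclose⟩ := hasym.exists_tendsto_dist_le hσ hσ'
  have h2δ : |b - b'| ≤ 2 * δ :=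
    hhyp.abs_sub_le_of_tendsto hclose (hσ.tendsto_dist_atTop z) hb (hb'.comp hs)
  linarith [hhyp.nonneg y]

/-- Busemann functions of asymptotic geodesic rays agree up to `40δ`. -/
theorem stmt7 {Z : Type*} [MetricSpace Z] [ProperSpace Z] {δ : ℝ}
    (hgeo : IsGeodesicSpace Z) (hhyp : IsDeltaHyperbolic Z δ)
    (σ σ' : ℝ → Z) (hσ : IsGeodesicRay σ) (hσ' : IsGeodesicRay σ')
    (hasym : AsymptoticRays σ σ')
    (y z : Z) (b b' : ℝ)
    (hb : Filter.Tendsto (fun t => dist y (σ t) - dist z (σ t)) Filter.atTop (nhds b))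
    (hb' : Filter.Tendsto (fun t => dist y (σ' t) - dist z (σ' t)) Filter.atTop (nhds b')) :
    |b - b'| ≤ 40 * δ :=
  stmt7_general hhyp σ σ' hσ hσ' hasym y z b b' hb hb'
end

section
/- Let Z be a proper geodesic δ-hyperbolic space, x, y ∈ Z and R > 0. If σ: [0,∞) → Z is a geodesic ray whose endpoint σ(∞) lies in the shadow O_R(y,x) := {ξ ∈ ∂Z : ⟨y,ξ⟩_x < R}, then |β_σ(y,x) − d(y,x)| < 2R + 48δ. -/
open Filter Metric Set

/-- If the endpoint of the geodesic ray `σ` lies in the shadow `O_R(y,x)`, then the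
Busemann cocycle `β_σ(y,x)` is within `2R + 48δ` of `d(y,x)`. -/
theorem stmt16 {Z : Type*} [MetricSpace Z] [ProperSpace Z] {δ : ℝ}
    (hgeo : IsGeodesicSpace Z) (hhyp : IsDeltaHyperbolic Z δ)
    (x y : Z) (R : ℝ) (hR : 0 < R)
    (σ : ℝ → Z) (hσ : IsGeodesicRay σ)
    (hshadow : ptRayGP x y σ < (R : EReal))
    (b : ℝ)
    (hb : Filter.Tendsto (fun t => dist y (σ t) - dist x (σ t)) Filter.atTop (nhds b)) :
    |b - dist y x| < 2 * R + 48 * δ := by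
  -- δ ≥ 0
  have hδ : 0 ≤ δ := by
    have h := hhyp x x x x
    simp [gromovProd, dist_self] at h
    linarith
  -- the Gromov product converges to (dist x y - b)/2
  have hgp : Filter.Tendsto (fun t => gromovProd x y (σ t)) Filter.atTop
      (nhds ((dist x y - b) / 2)) := by
    have : (fun t => gromovProd x y (σ t)) =
        fun t => (dist x y - (dist y (σ t) - dist x (σ t))) / 2 := by
      funext t; simp [gromovProd]; ring
    rw [this]
    exact ((tendsto_const_nhds.sub hb).div_const 2)
  have hgpE : Filter.Tendsto (fun t => ((gromovProd x y (σ t) : ℝ) : EReal)) Filter.atTop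
      (nhds (((dist x y - b) / 2 : ℝ) : EReal)) :=
    (continuous_coe_real_ereal.continuousAt).tendsto.comp hgp
  have hlim : ptRayGP x y σ = (((dist x y - b) / 2 : ℝ) : EReal) :=
    hgpE.liminf_eq
  have hlt : (dist x y - b) / 2 < R := by
    rw [hlim] at hshadow
    exact_mod_cast hshadow
  -- b ≤ dist y x
  have hble : b ≤ dist y x := by
    apply le_of_tendsto hb
    filter_upwards with t
    have := dist_triangle y x (σ t)
    linarith
  have hxy : dist x y = dist y x := dist_comm x y
  rw [abs_lt]
  constructor <;> nlinarith
end
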